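/- Let p ∈ (2, 3). Then for all z > 0 with z ≠ 1 one has g_p(z) := z^{p−2} + 1 − (z^{p−1} − 1)/(z − 1) > 0. Equivalently, for all σ_1, σ_2 ∈ (0,∞) with σ_1 ≠ σ_2, σ_1^{p−2} + σ_2^{p−2} ≥ (σ_2^{p−1} − σ_1^{p−1})/(σ_2 − σ_1); that is, condition (psi-cond) holds for ψ_p with constant κ = (p−1)/2. -/

import Mathlib

/-!
With `a = p - 2 < 1`, the gap `x ^ a + y ^ a - (y ^ (a + 1) - x ^ (a + 1)) / (y - x)` equals
`x * y * (x ^ (a - 1) - y ^ (a - 1)) / (y - x)`, which is positive because `t ↦ t ^ (a - 1)` is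
strictly decreasing on `(0, ∞)`. The claim about `g_p(z)` is the case `x = 1`, `y = z`.
-/

open Real Set

theorem rpow_sub_rpow_div_sub_pos_of_exponent_neg {r x y : ℝ} (hr : r < 0) (hx : 0 < x)
    (hy : 0 < y) (hxy : x ≠ y) : 0 < (x ^ r - y ^ r) / (y - x) := by
  have h := (strictAntiOn_rpow_Ioi_of_exponent_neg hr).slope_neg hx hy hxy
  rw [slope_def_field] at h
  rw [← neg_sub, neg_div]
  exact neg_pos.mpr h

theorem rpow_add_rpow_sub_div_eq_mul_div {a x y : ℝ} (hx : 0 < x) (hy : 0 < y) (hxy : x ≠ y) :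
    x ^ a + y ^ a - (y ^ (a + 1) - x ^ (a + 1)) / (y - x) =
      x * y * ((x ^ (a - 1) - y ^ (a - 1)) / (y - x)) := by
  have hyx : y - x ≠ 0 := sub_ne_zero.mpr hxy.symm
  rw [rpow_add_one hx.ne', rpow_add_one hy.ne', rpow_sub_one hx.ne', rpow_sub_one hy.ne']
  field_simp
  ring

theorem rpow_add_one_sub_div_lt_rpow_add_rpow {a x y : ℝ} (ha : a < 1) (hx : 0 < x)
    (hy : 0 < y) (hxy : x ≠ y) :
    (y ^ (a + 1) - x ^ (a + 1)) / (y - x) < x ^ a + y ^ a := by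
  have h := rpow_add_rpow_sub_div_eq_mul_div (a := a) hx hy hxy
  have hpos := mul_pos (mul_pos hx hy)
    (rpow_sub_rpow_div_sub_pos_of_exponent_neg (sub_neg.mpr ha) hx hy hxy)
  linarith

theorem stmt_3 (p : ℝ) (hp : p ∈ Set.Ioo (2:ℝ) 3) :
    (∀ z : ℝ, 0 < z → z ≠ 1 →
        0 < z ^ (p - 2) + 1 - (z ^ (p - 1) - 1) / (z - 1)) ∧
      (∀ σ₁ σ₂ : ℝ, 0 < σ₁ → 0 < σ₂ → σ₁ ≠ σ₂ →
        (σ₂ ^ (p - 1) - σ₁ ^ (p - 1)) / (σ₂ - σ₁) ≤ σ₁ ^ (p - 2) + σ₂ ^ (p - 2)) := by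
  have key : ∀ x y : ℝ, 0 < x → 0 < y → x ≠ y →
      (y ^ (p - 1) - x ^ (p - 1)) / (y - x) < x ^ (p - 2) + y ^ (p - 2) := by
    intro x y hx hy hxy
    have h := rpow_add_one_sub_div_lt_rpow_add_rpow (a := p - 2) (by linarith [hp.2]) hx hy hxy
    rwa [show p - 2 + 1 = p - 1 by ring] at h
  refine ⟨fun z hz hz1 => ?_, fun σ₁ σ₂ h₁ h₂ hne => (key σ₁ σ₂ h₁ h₂ hne).le⟩
  have h := key 1 z one_pos hz hz1.symm
  rw [one_rpow, one_rpow] at h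
  linarith
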